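/- arXiv:math/9502218 — 8 statements merged into one kernel-verified Lean document; each statement's English description precedes it below -/
import Mathlib

section
/- Six Regions, Region 2: for all integers n, k with k ≥ 0 > n, the Roman coefficient satisfies ⌊n choose k⌉ = (-1)^k·C(-n+k-1, k). -/
/-- Roman factorial of an integer, as a rational number. -/
def romanFactorial (n : ℤ) : ℚ :=
  if 0 ≤ n then (n.toNat.factorial : ℚ)
  else (-1 : ℚ) ^ (n + 1) / ((-n - 1).toNat.factorial : ℚ)

/-- Roman coefficient of two integers. -/
def romanCoeff (n k : ℤ) : ℚ :=
  romanFactorial n / (romanFactorial k * romanFactorial (n - k))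

/-- Region 2: if `k ≥ 0 > n` then `⌊n choose k⌉ = (-1)^k C(-n+k-1, k)`. -/
theorem romanCoeff_region2 (n k : ℤ) (h1 : k ≥ 0) (h2 : 0 > n) :
    romanCoeff n k = (-1 : ℚ) ^ k * ((-n + k - 1).toNat.choose k.toNat : ℚ) := by
  obtain ⟨k', rfl⟩ := Int.eq_ofNat_of_zero_le h1
  obtain ⟨a, ha⟩ := Int.eq_ofNat_of_zero_le (by omega : (0:ℤ) ≤ -n-1)
  have hn : n = -((a:ℤ)+1) := by omega
  subst hn
  have e1 : (-(-((a:ℤ)+1))-1).toNat = a := by omega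
  have e2 : (-(-((a:ℤ)+1)-(k':ℤ))-1).toNat = a + k' := by omega
  have e3 : (-(-((a:ℤ)+1))+(k':ℤ)-1).toNat = a + k' := by omega
  have e4 : ((k':ℤ)).toNat = k' := by omega
  simp only [romanCoeff, romanFactorial, if_pos (by positivity : (0:ℤ) ≤ (k':ℤ)),
    if_neg (by omega : ¬ (0:ℤ) ≤ -((a:ℤ)+1)),
    if_neg (by omega : ¬ (0:ℤ) ≤ -((a:ℤ)+1)-(k':ℤ)), e1, e2, e3, e4]
  have hc : ((a + k').choose k' : ℚ) = (a+k').factorial / (k'.factorial * a.factorial) := by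
    rw [Nat.cast_choose ℚ (by omega : k' ≤ a + k')]
    simp
  rw [hc]
  have hx : (-((a:ℤ)+1)+1) = -(a:ℤ) := by ring
  have hy : (-((a:ℤ)+1)-(k':ℤ)+1) = -((a:ℤ)+(k':ℤ)) := by ring
  rw [hx, hy]
  have p1 : (-1:ℚ)^(-(a:ℤ)) = (-1)^a := by
    rw [zpow_neg, zpow_natCast, ← inv_pow]; norm_num
  have p2 : (-1:ℚ)^(-((a:ℤ)+(k':ℤ))) = (-1)^a * (-1)^k' := by
    rw [zpow_neg, ← Nat.cast_add, zpow_natCast, ← inv_pow]; norm_num [pow_add]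
  have p3 : (-1:ℚ)^((k':ℤ)) = (-1)^k' := zpow_natCast _ _
  rw [p1, p2, p3]
  have f1 : (a.factorial : ℚ) ≠ 0 := Nat.cast_ne_zero.mpr a.factorial_ne_zero
  have f2 : (k'.factorial : ℚ) ≠ 0 := Nat.cast_ne_zero.mpr k'.factorial_ne_zero
  have f3 : ((a+k').factorial : ℚ) ≠ 0 := Nat.cast_ne_zero.mpr (a+k').factorial_ne_zero
  have s : (-1:ℚ)^a * (-1)^a = 1 := by
    rw [← pow_add, ← two_mul, pow_mul]; norm_num
  field_simp
  ring_nf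
  rw [mul_comm k' 2, pow_mul]; norm_num
end

section
/- Six Regions, Region 3: for all integers n, k with 0 > n ≥ k, the Roman coefficient satisfies ⌊n choose k⌉ = (-1)^(n+k)·C(-k-1, n-k). -/
/-!
Write `n = -(a+1)` and `k = -(a+d+1)` with `a, d ≥ 0`. Then `⌊n⌉! = (-1)^a / a!`,
`⌊k⌉! = (-1)^(a+d) / (a+d)!` and `⌊n-k⌉! = d!`, so `⌊n choose k⌉ = (-1)^d (a+d)! / (a! d!)`,
and `(-1)^d = (-1)^(n-k) = (-1)^(n+k)`.
-/

open Nat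

theorem neg_one_zpow_add_eq_zpow_sub {α : Type*} [DivisionRing α] (n k : ℤ) :
    (-1 : α) ^ (n + k) = (-1) ^ (n - k) := by
  rw [show n + k = n - k + 2 * k by ring, zpow_add₀ (by norm_num), zpow_mul]
  norm_num

theorem romanFactorial_natCast (m : ℕ) : romanFactorial m = m ! := by
  simp [romanFactorial]

theorem romanFactorial_negSucc (m : ℕ) : romanFactorial (Int.negSucc m) = (-1) ^ m / m ! := by
  rw [romanFactorial, if_neg (Int.negSucc_lt_zero m).not_ge, show Int.negSucc m + 1 = -m by omega,
    zpow_neg, zpow_natCast, show -Int.negSucc m - 1 = m by omega, Int.toNat_natCast,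
    ← inv_pow, inv_neg_one]

theorem romanCoeff_negSucc_negSucc_add (a d : ℕ) :
    romanCoeff (Int.negSucc a) (Int.negSucc (a + d)) = (-1) ^ d * (a + d).choose d := by
  rw [romanCoeff, show Int.negSucc a - Int.negSucc (a + d) = d by omega, romanFactorial_negSucc,
    romanFactorial_negSucc, romanFactorial_natCast, ← Nat.choose_symm_add, Nat.cast_add_choose]
  field_simp
  rw [pow_add, mul_assoc, ← pow_add, Even.neg_one_pow ⟨d, rfl⟩, mul_one]

/-- Region 3: if `0 > n ≥ k` then `⌊n choose k⌉ = (-1)^(n+k) C(-k-1, n-k)`. -/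
theorem romanCoeff_region3 (n k : ℤ) (h1 : 0 > n) (h2 : n ≥ k) :
    romanCoeff n k = (-1 : ℚ) ^ (n + k) * ((-k - 1).toNat.choose (n - k).toNat : ℚ) := by
  obtain ⟨a, rfl⟩ := Int.eq_negSucc_of_lt_zero h1
  obtain ⟨d, hd⟩ : ∃ d : ℕ, Int.negSucc a - k = d := ⟨_, (Int.toNat_of_nonneg (by omega)).symm⟩
  obtain rfl : k = Int.negSucc (a + d) := by omega
  rw [romanCoeff_negSucc_negSucc_add, neg_one_zpow_add_eq_zpow_sub, hd, zpow_natCast,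
    show (-Int.negSucc (a + d) - 1).toNat = a + d by omega, Int.toNat_natCast]
end

section
/- Six Regions, Region 6: for all integers n, k with 0 > k > n, the Roman coefficient satisfies ⌊n choose k⌉ = 1/((n-k)·C(-n-1,-k-1)) = 1/(k·C(-n-1,-k)) = 1/((n+1)·C(-n-2,-k-1)) = (-1)^k·⌊k-n-1 choose -n-1⌉ = (-1)^k·⌊k-n-1 choose k⌉, where n-k, k, and n+1 are negative integers and the equalities are of rational numbers. -/
lemma neg_one_zpow_neg_nat (b : ℕ) : (-1 : ℚ) ^ (-(b:ℤ)) = (-1) ^ b := by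
  rw [zpow_neg, zpow_natCast, ← inv_pow, inv_neg, inv_one]

lemma rf_neg (b : ℕ) : romanFactorial (-((b:ℤ)+1)) = (-1)^b / b.factorial := by
  unfold romanFactorial
  rw [if_neg (by omega)]
  have h1 : (-((b:ℤ)+1) + 1) = -(b:ℤ) := by ring
  have h2 : (-(-((b:ℤ)+1)) - 1).toNat = b := by omega
  rw [h1, h2, neg_one_zpow_neg_nat]

lemma rf_nat (b : ℕ) : romanFactorial (b:ℤ) = b.factorial := by
  unfold romanFactorial
  rw [if_pos (by omega), Int.toNat_natCast]

/-- Region 6: if `0 > k > n` then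
`⌊n choose k⌉ = 1/((n-k) C(-n-1,-k-1)) = 1/(k C(-n-1,-k)) = 1/((n+1) C(-n-2,-k-1))
             = (-1)^k ⌊k-n-1 choose -n-1⌉ = (-1)^k ⌊k-n-1 choose k⌉`. -/
theorem romanCoeff_region6 (n k : ℤ) (h1 : 0 > k) (h2 : k > n) :
    romanCoeff n k = 1 / (((n - k : ℤ) : ℚ) * ((-n - 1).toNat.choose (-k - 1).toNat : ℚ)) ∧
    romanCoeff n k = 1 / ((k : ℚ) * ((-n - 1).toNat.choose (-k).toNat : ℚ)) ∧
    romanCoeff n k =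
      1 / (((n + 1 : ℤ) : ℚ) * ((-n - 2).toNat.choose (-k - 1).toNat : ℚ)) ∧
    romanCoeff n k = (-1 : ℚ) ^ k * romanCoeff (k - n - 1) (-n - 1) ∧
    romanCoeff n k = (-1 : ℚ) ^ k * romanCoeff (k - n - 1) k := by
  obtain ⟨a, hk⟩ : ∃ a : ℕ, k = -((a:ℤ)+1) := ⟨(-k-1).toNat, by omega⟩
  obtain ⟨c, hn⟩ : ∃ c : ℕ, n = -(((a:ℤ)+c)+2) := ⟨(k-n-1).toNat, by omega⟩
  subst hk hn
  have t1 : (-(-(((a:ℤ)+c)+2)) - 1).toNat = a + c + 1 := by omega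
  have t2 : (-(-((a:ℤ)+1)) - 1).toNat = a := by omega
  have t3 : (-(-((a:ℤ)+1))).toNat = a + 1 := by omega
  have t4 : (-(-(((a:ℤ)+c)+2)) - 2).toNat = a + c := by omega
  rw [t1, t2, t3, t4]
  have e1 : -(((a:ℤ)+c)+2) = -(((a+c+1 : ℕ) : ℤ)+1) := by push_cast; ring
  have e2' : -(((a:ℤ)+c)+2) - -((a:ℤ)+1) = -(((c:ℕ):ℤ)+1) := by push_cast; ring
  have e3 : -((a:ℤ)+1) - -(((a:ℤ)+c)+2) - 1 = ((c:ℕ):ℤ) := by push_cast; ring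
  have e4 : -(-(((a:ℤ)+c)+2)) - 1 = ((a+c+1 : ℕ):ℤ) := by push_cast; ring
  have e5 : ((c:ℕ):ℤ) - ((a+c+1:ℕ):ℤ) = -(((a:ℕ):ℤ)+1) := by push_cast; ring
  have e6 : ((c:ℕ):ℤ) - -((a:ℤ)+1) = ((a+c+1:ℕ):ℤ) := by push_cast; ring
  have hz : (-1:ℚ)^(-((a:ℤ)+1)) = (-1:ℚ)^(a+1) := by
    rw [show -((a:ℤ)+1) = -(((a+1:ℕ)):ℤ) by push_cast; ring, neg_one_zpow_neg_nat]
  have hc : romanCoeff (-(((a:ℤ)+c)+2)) (-((a:ℤ)+1))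
      = -((a.factorial * c.factorial : ℚ) / (a+c+1).factorial) := by
    unfold romanCoeff
    rw [e2', e1]
    rw [show -((a:ℤ)+1) = -(((a:ℕ):ℤ)+1) from by push_cast; ring, rf_neg, rf_neg, rf_neg]
    have hfa : (a.factorial : ℚ) ≠ 0 := Nat.cast_ne_zero.mpr a.factorial_ne_zero
    have hfc : (c.factorial : ℚ) ≠ 0 := Nat.cast_ne_zero.mpr c.factorial_ne_zero
    have hfac : ((a+c+1).factorial : ℚ) ≠ 0 := Nat.cast_ne_zero.mpr (a+c+1).factorial_ne_zero
    field_simp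
    ring_nf
  have hfa : (a.factorial : ℚ) ≠ 0 := Nat.cast_ne_zero.mpr a.factorial_ne_zero
  have hfc : (c.factorial : ℚ) ≠ 0 := Nat.cast_ne_zero.mpr c.factorial_ne_zero
  have hfac : ((a+c+1).factorial : ℚ) ≠ 0 := Nat.cast_ne_zero.mpr (a+c+1).factorial_ne_zero
  have hch1 : ((a+c+1).choose a * a.factorial * (c+1).factorial : ℚ) = (a+c+1).factorial := by
    have := Nat.choose_mul_factorial_mul_factorial (show a ≤ a+c+1 by omega)
    rw [show a+c+1-a = c+1 by omega] at this
    exact_mod_cast this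
  have hch2 : ((a+c+1).choose (a+1) * (a+1).factorial * c.factorial : ℚ) = (a+c+1).factorial := by
    have := Nat.choose_mul_factorial_mul_factorial (show a+1 ≤ a+c+1 by omega)
    rw [show a+c+1-(a+1) = c by omega] at this
    exact_mod_cast this
  have hch3 : ((a+c).choose a * a.factorial * c.factorial : ℚ) = (a+c).factorial := by
    have := Nat.choose_mul_factorial_mul_factorial (show a ≤ a+c by omega)
    rw [show a+c-a = c by omega] at this
    exact_mod_cast this
  have hch1ne : (((a+c+1).choose a : ℚ)) ≠ 0 := by
    exact_mod_cast (Nat.choose_pos (by omega)).ne'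
  have hch2ne : (((a+c+1).choose (a+1) : ℚ)) ≠ 0 := by
    exact_mod_cast (Nat.choose_pos (by omega)).ne'
  have hch3ne : (((a+c).choose a : ℚ)) ≠ 0 := by
    exact_mod_cast (Nat.choose_pos (by omega)).ne'
  have hfc1 : ((c+1).factorial : ℚ) = ((c:ℚ)+1) * c.factorial := by
    rw [Nat.factorial_succ]; push_cast; ring
  have hfa1 : ((a+1).factorial : ℚ) = ((a:ℚ)+1) * a.factorial := by
    rw [Nat.factorial_succ]; push_cast; ring
  have hfac1 : ((a+c+1).factorial : ℚ) = ((a:ℚ)+(c:ℚ)+1) * (a+c).factorial := by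
    rw [show a+c+1 = (a+c)+1 from rfl, Nat.factorial_succ]; push_cast; ring
  refine ⟨?_, ?_, ?_, ?_, ?_⟩
  · rw [hc]
    push_cast
    rw [hfc1] at hch1
    rw [← neg_div, div_eq_div_iff hfac (mul_ne_zero (by
      rw [show (-((a:ℚ)+(c:ℚ)+2) - -((a:ℚ)+1)) = -((c:ℚ)+1) from by ring]
      exact neg_ne_zero.mpr (by positivity)) hch1ne)]
    linear_combination hch1
  · rw [hc]
    push_cast
    rw [hfa1] at hch2
    rw [← neg_div, div_eq_div_iff hfac (mul_ne_zero
      (neg_ne_zero.mpr (by positivity)) hch2ne)]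
    linear_combination hch2
  · rw [hc]
    push_cast
    rw [hfac1]
    rw [← neg_div, div_eq_div_iff (by positivity) (mul_ne_zero (by
      rw [show (-((a:ℚ)+(c:ℚ)+2) + 1) = -((a:ℚ)+(c:ℚ)+1) from by ring]
      exact neg_ne_zero.mpr (by positivity)) hch3ne)]
    linear_combination ((a:ℚ)+(c:ℚ)+1) * hch3
  · rw [hc]
    unfold romanCoeff
    rw [e3, e4, e5, rf_nat, rf_nat, rf_neg, hz]
    have hm : ((-1:ℚ)^a) ≠ 0 := pow_ne_zero _ (by norm_num)
    field_simp
    rw [pow_succ]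
    ring
  · rw [hc]
    unfold romanCoeff
    rw [e3, e6, rf_nat, rf_nat,
      show -((a:ℤ)+1) = -(((a:ℕ):ℤ)+1) from by push_cast; ring, rf_neg, hz]
    have hm : ((-1:ℚ)^a) ≠ 0 := pow_ne_zero _ (by norm_num)
    field_simp
    rw [pow_succ]
    ring
end

section
/- For all integers n and k, the Roman coefficient ⌊n choose k⌉ is nonzero, and it is either an integer or the reciprocal of a nonzero integer; that is, there exists a nonzero integer m with ⌊n choose k⌉ = m or ⌊n choose k⌉ = 1/m. -/
lemma rf_of_nonneg (n : ℤ) (h : 0 ≤ n) :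
    romanFactorial n = (n.toNat.factorial : ℚ) := by
  simp [romanFactorial, h]

lemma rf_of_neg (n : ℤ) (h : n < 0) :
    ∃ s : ℚ, (s = 1 ∨ s = -1) ∧
      romanFactorial n = s / (((-n - 1).toNat.factorial : ℚ)) := by
  refine ⟨(-1 : ℚ) ^ (n + 1), ?_, ?_⟩
  · rcases Int.even_or_odd (n + 1) with he | ho
    · exact Or.inl he.neg_one_zpow
    · exact Or.inr ho.neg_one_zpow
  · simp [romanFactorial, not_le.mpr h]

lemma romanCoeff_sub (n k : ℤ) : romanCoeff n (n - k) = romanCoeff n k := by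
  unfold romanCoeff
  rw [show n - (n - k) = k by ring]
  ring

lemma aux_exists (n k : ℤ) (hk : 0 ≤ k) :
    ∃ m : ℤ, m ≠ 0 ∧ (romanCoeff n k = (m : ℚ) ∨ romanCoeff n k = 1 / (m : ℚ)) := by
  rcases le_or_gt k n with hnk | hnk
  · -- 0 ≤ k ≤ n : integer case, binomial coefficient
    have hn : 0 ≤ n := le_trans hk hnk
    have hKN : k.toNat ≤ n.toNat := by omega
    obtain ⟨M, hMdef⟩ : ∃ M : ℕ, M = n.toNat.choose k.toNat := ⟨_, rfl⟩
    have hMpos : 0 < M := hMdef ▸ Nat.choose_pos hKN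
    have hfac : n.toNat.factorial = M * (k.toNat.factorial * (n.toNat - k.toNat).factorial) := by
      rw [hMdef, ← Nat.choose_mul_factorial_mul_factorial hKN]; ring
    have hfacQ : (n.toNat.factorial : ℚ) =
        (M : ℚ) * ((k.toNat.factorial : ℚ) * ((n.toNat - k.toNat).factorial : ℚ)) := by
      exact_mod_cast congrArg (Nat.cast : ℕ → ℚ) hfac
    refine ⟨(M : ℤ), by exact_mod_cast hMpos.ne', Or.inl ?_⟩
    have hsub : (n - k).toNat = n.toNat - k.toNat := by omega
    unfold romanCoeff
    rw [rf_of_nonneg n hn, rf_of_nonneg k hk, rf_of_nonneg _ (by omega : (0:ℤ) ≤ n - k),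
      hsub, hfacQ]
    have h1 : (k.toNat.factorial : ℚ) ≠ 0 := Nat.cast_ne_zero.mpr k.toNat.factorial_ne_zero
    have h2 : ((n.toNat - k.toNat).factorial : ℚ) ≠ 0 :=
      Nat.cast_ne_zero.mpr (n.toNat - k.toNat).factorial_ne_zero
    push_cast
    field_simp
  · rcases le_or_gt 0 n with hn | hn
    · -- 0 ≤ n < k : reciprocal case
      obtain ⟨s, hs, hrf⟩ := rf_of_neg (n - k) (by omega)
      have hDlt : n.toNat < k.toNat := by omega
      set N := n.toNat
      set K := k.toNat
      have hD : (-(n - k) - 1).toNat = K - N - 1 := by omega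
      set D := K - N - 1 with hDdef
      obtain ⟨M, hMdef⟩ : ∃ M : ℕ, M = K.choose N * (K - N) := ⟨_, rfl⟩
      have hMpos : 0 < M :=
        hMdef ▸ Nat.mul_pos (Nat.choose_pos (le_of_lt hDlt)) (by omega)
      have hfacN : K.factorial = M * (N.factorial * D.factorial) := by
        have h1 := Nat.choose_mul_factorial_mul_factorial (le_of_lt hDlt)
        have h2 : (K - N).factorial = (K - N) * D.factorial := by
          have h3 : K - N = D + 1 := by omega
          rw [h3, Nat.factorial_succ]
        rw [hMdef, ← h1, h2]; ring
      have hfacQ : (K.factorial : ℚ) = (M : ℚ) * ((N.factorial : ℚ) * (D.factorial : ℚ)) := by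
        exact_mod_cast congrArg (Nat.cast : ℕ → ℚ) hfacN
      have h1 : (M : ℚ) ≠ 0 := Nat.cast_ne_zero.mpr hMpos.ne'
      have h2 : (D.factorial : ℚ) ≠ 0 := Nat.cast_ne_zero.mpr D.factorial_ne_zero
      have h3 : (N.factorial : ℚ) ≠ 0 := Nat.cast_ne_zero.mpr N.factorial_ne_zero
      have hcoeff : romanCoeff n k = s / (M : ℚ) := by
        unfold romanCoeff
        rw [rf_of_nonneg n hn, rf_of_nonneg k hk, hrf, hD, hfacQ]
        rcases hs with rfl | rfl <;> (field_simp; try ring; try tauto)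
      rcases hs with rfl | rfl
      · refine ⟨(M : ℤ), by exact_mod_cast hMpos.ne', Or.inr ?_⟩
        rw [hcoeff]; push_cast; ring
      · refine ⟨-(M : ℤ), by simpa using hMpos.ne', Or.inr ?_⟩
        rw [hcoeff]; push_cast; ring
    · -- n < 0 ≤ k : integer case
      obtain ⟨s1, hs1, hrf1⟩ := rf_of_neg n hn
      obtain ⟨s2, hs2, hrf2⟩ := rf_of_neg (n - k) (by omega)
      set A := (-n - 1).toNat
      set K := k.toNat
      have hB : (-(n - k) - 1).toNat = A + K := by omega
      obtain ⟨M, hMdef⟩ : ∃ M : ℕ, M = (A + K).choose K := ⟨_, rfl⟩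
      have hMpos : 0 < M := hMdef ▸ Nat.choose_pos (by omega)
      have hfacN : (A + K).factorial = M * (K.factorial * A.factorial) := by
        have h1 := Nat.choose_mul_factorial_mul_factorial (show K ≤ A + K by omega)
        rw [hMdef, ← h1]
        simp [Nat.add_sub_cancel]
        ring
      have hfacQ : ((A + K).factorial : ℚ) =
          (M : ℚ) * ((K.factorial : ℚ) * (A.factorial : ℚ)) := by
        exact_mod_cast congrArg (Nat.cast : ℕ → ℚ) hfacN
      have h1 : (K.factorial : ℚ) ≠ 0 := Nat.cast_ne_zero.mpr K.factorial_ne_zero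
      have h2 : (A.factorial : ℚ) ≠ 0 := Nat.cast_ne_zero.mpr A.factorial_ne_zero
      have hcoeff : romanCoeff n k = s1 * s2 * (M : ℚ) := by
        unfold romanCoeff
        rw [rf_of_nonneg k hk, hrf1, hrf2, hB, hfacQ]
        rcases hs1 with rfl | rfl <;> rcases hs2 with rfl | rfl <;>
          (field_simp; tauto)
      rcases hs1 with rfl | rfl <;> rcases hs2 with rfl | rfl
      · exact ⟨(M : ℤ), by exact_mod_cast hMpos.ne', Or.inl (by rw [hcoeff]; push_cast; ring)⟩
      · exact ⟨-(M : ℤ), by simpa using hMpos.ne', Or.inl (by rw [hcoeff]; push_cast; ring)⟩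
      · exact ⟨-(M : ℤ), by simpa using hMpos.ne', Or.inl (by rw [hcoeff]; push_cast; ring)⟩
      · exact ⟨(M : ℤ), by exact_mod_cast hMpos.ne', Or.inl (by rw [hcoeff]; push_cast; ring)⟩

lemma romanCoeff_exists (n k : ℤ) :
    ∃ m : ℤ, m ≠ 0 ∧ (romanCoeff n k = (m : ℚ) ∨ romanCoeff n k = 1 / (m : ℚ)) := by
  rcases le_or_gt 0 k with hk | hk
  · exact aux_exists n k hk
  · rcases le_or_gt 0 (n - k) with hnk | hnk
    · rw [← romanCoeff_sub n k]
      exact aux_exists n (n - k) hnk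
    · -- k < 0, n - k < 0, hence n < 0 : reciprocal case
      have hn : n < 0 := by omega
      obtain ⟨s1, hs1, hrf1⟩ := rf_of_neg n hn
      obtain ⟨s2, hs2, hrf2⟩ := rf_of_neg k hk
      obtain ⟨s3, hs3, hrf3⟩ := rf_of_neg (n - k) hnk
      set A := (-k - 1).toNat
      set B := (-(n - k) - 1).toNat
      have hC : (-n - 1).toNat = A + B + 1 := by omega
      obtain ⟨M, hMdef⟩ : ∃ M : ℕ, M = (A + B).choose A * (A + B + 1) := ⟨_, rfl⟩
      have hMpos : 0 < M := hMdef ▸ Nat.mul_pos (Nat.choose_pos (by omega)) (by omega)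
      have hfacN : (A + B + 1).factorial = M * (A.factorial * B.factorial) := by
        have h1 := Nat.choose_mul_factorial_mul_factorial (show A ≤ A + B by omega)
        have h2 : (A + B + 1).factorial = (A + B + 1) * (A + B).factorial :=
          Nat.factorial_succ _
        rw [hMdef, h2, ← h1]
        simp [Nat.add_sub_cancel_left]
        ring
      have hfacQ : ((A + B + 1).factorial : ℚ) =
          (M : ℚ) * ((A.factorial : ℚ) * (B.factorial : ℚ)) := by
        exact_mod_cast congrArg (Nat.cast : ℕ → ℚ) hfacN
      have h1 : (A.factorial : ℚ) ≠ 0 := Nat.cast_ne_zero.mpr A.factorial_ne_zero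
      have h2 : (B.factorial : ℚ) ≠ 0 := Nat.cast_ne_zero.mpr B.factorial_ne_zero
      have h4 : (M : ℚ) ≠ 0 := Nat.cast_ne_zero.mpr hMpos.ne'
      have hcoeff : romanCoeff n k = s1 * s2 * s3 / (M : ℚ) := by
        unfold romanCoeff
        rw [hrf1, hrf2, hrf3, hC, hfacQ]
        rcases hs1 with rfl | rfl <;> rcases hs2 with rfl | rfl <;>
            rcases hs3 with rfl | rfl <;>
          (field_simp; try ring; try tauto)
      have hsp : s1 * s2 * s3 = 1 ∨ s1 * s2 * s3 = -1 := by
        rcases hs1 with rfl | rfl <;> rcases hs2 with rfl | rfl <;>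
          rcases hs3 with rfl | rfl <;> norm_num
      rcases hsp with hsp | hsp
      · refine ⟨(M : ℤ), by exact_mod_cast hMpos.ne', Or.inr ?_⟩
        rw [hcoeff, hsp]; push_cast; ring
      · refine ⟨-(M : ℤ), by simpa using hMpos.ne', Or.inr ?_⟩
        rw [hcoeff, hsp]; push_cast; ring

/-- Every Roman coefficient is nonzero, and is an integer or the reciprocal of a
nonzero integer. -/
theorem romanCoeff_ne_zero_and_int_or_inv_int (n k : ℤ) :
    romanCoeff n k ≠ 0 ∧
    ∃ m : ℤ, m ≠ 0 ∧ (romanCoeff n k = (m : ℚ) ∨ romanCoeff n k = 1 / (m : ℚ)) := by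
  obtain ⟨m, hm, h⟩ := romanCoeff_exists n k
  refine ⟨?_, m, hm, h⟩
  have hmQ : (m : ℚ) ≠ 0 := Int.cast_ne_zero.mpr hm
  rcases h with h | h <;> rw [h]
  · exact hmQ
  · exact one_div_ne_zero hmQ
end

section
/- Pascal's Recursion: for all real numbers a and b with a ≠ 0, b ≠ 0, and a ≠ b, the Roman coefficients satisfy ⌊a choose b⌉ = ⌊a-1 choose b⌉ + ⌊a-1 choose b-1⌉. -/
open Classical in
/-- Roman factorial of a real number. -/
noncomputable def romanFactorialR (a : ℝ) : ℝ :=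
  if (∃ m : ℤ, m < 0 ∧ (m : ℝ) = a) then
    (-1 : ℝ) ^ (⌊-a⌋.toNat + 1) / ((⌊-a⌋.toNat - 1).factorial : ℝ)
  else Real.Gamma (a + 1)

open Classical in
/-- Roman a. -/
noncomputable def romanR (a : ℝ) : ℝ := if a = 0 then 1 else a

/-- Roman coefficient of two real numbers. -/
noncomputable def romanCoeffR (a b : ℝ) : ℝ :=
  romanFactorialR a / (romanFactorialR b * romanFactorialR (a - b))

lemma romanFactorialR_neg_nat (n : ℕ) (hn : 1 ≤ n) :
    romanFactorialR (-(n : ℝ)) = (-1 : ℝ) ^ (n + 1) / ((n - 1).factorial : ℝ) := by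
  have hcond : ∃ m : ℤ, m < 0 ∧ (m : ℝ) = -(n : ℝ) := by
    exact ⟨-(n : ℤ), by exact_mod_cast neg_neg_iff_pos.mpr (by exact_mod_cast hn), by push_cast; ring⟩
  rw [romanFactorialR, if_pos hcond]
  have : ⌊-(-(n : ℝ))⌋ = (n : ℤ) := by simp
  rw [this]
  simp

lemma romanFactorialR_ne_zero (a : ℝ) : romanFactorialR a ≠ 0 := by
  rw [romanFactorialR]
  split_ifs with h
  · exact div_ne_zero (pow_ne_zero _ (by norm_num)) (by exact_mod_cast (Nat.factorial_pos _).ne')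
  · apply Real.Gamma_ne_zero
    intro m hm
    apply h
    refine ⟨-(m : ℤ) - 1, by omega, ?_⟩
    push_cast
    linarith

lemma romanFactorialR_rec (a : ℝ) (ha : a ≠ 0) :
    romanFactorialR a = a * romanFactorialR (a - 1) := by
  by_cases h : ∃ m : ℤ, m < 0 ∧ (m : ℝ) = a - 1
  · obtain ⟨m, hm, hma⟩ := h
    have hm1 : m + 1 < 0 := by
      rcases lt_or_eq_of_le (by omega : m + 1 ≤ 0) with h' | h'
      · exact h'
      · exfalso; apply ha
        have : a = ((m : ℝ) + 1) := by linarith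
        rw [this]; exact_mod_cast congrArg (fun x : ℤ => (x : ℝ)) h'
    obtain ⟨n, hn⟩ : ∃ n : ℕ, (n : ℤ) = -(m + 1) :=
      ⟨(-(m + 1)).toNat, Int.toNat_of_nonneg (by omega)⟩
    have hn1 : 1 ≤ n := by omega
    have han : a = -(n : ℝ) := by
      have h2 : (n : ℝ) = -((m : ℝ) + 1) := by exact_mod_cast congrArg (fun x : ℤ => (x : ℝ)) hn
      linarith
    have han1 : a - 1 = -((n + 1 : ℕ) : ℝ) := by push_cast; linarith
    rw [han1, han, romanFactorialR_neg_nat n hn1, romanFactorialR_neg_nat (n+1) (by omega)]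
    obtain ⟨k, rfl⟩ : ∃ k, n = k + 1 := ⟨n - 1, by omega⟩
    simp only [Nat.add_sub_cancel, Nat.factorial_succ]
    have hk : (k.factorial : ℝ) ≠ 0 := by exact_mod_cast (Nat.factorial_pos _).ne'
    push_cast
    field_simp
    ring
  · have h' : ¬ ∃ m : ℤ, m < 0 ∧ (m : ℝ) = a := by
      rintro ⟨m, hm, hma⟩
      exact h ⟨m - 1, by omega, by push_cast; linarith⟩
    rw [romanFactorialR, if_neg h', romanFactorialR, if_neg h]
    rw [sub_add_cancel, Real.Gamma_add_one ha]

/-- Pascal's recursion: if `a ≠ 0`, `b ≠ 0` and `a ≠ b`, then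
`⌊a choose b⌉ = ⌊a-1 choose b⌉ + ⌊a-1 choose b-1⌉`. -/
theorem romanCoeffR_pascal (a b : ℝ) (ha : a ≠ 0) (hb : b ≠ 0) (hab : a ≠ b) :
    romanCoeffR a b = romanCoeffR (a - 1) b + romanCoeffR (a - 1) (b - 1) := by
  have hab' : a - b ≠ 0 := sub_ne_zero.mpr hab
  have h1 := romanFactorialR_rec a ha
  have h2 := romanFactorialR_rec b hb
  have h3 := romanFactorialR_rec (a - b) hab'
  unfold romanCoeffR
  rw [show a - 1 - b = a - b - 1 by ring, show a - 1 - (b - 1) = a - b by ring,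
    h1, h2, h3]
  have n1 := romanFactorialR_ne_zero (a - 1)
  have n2 := romanFactorialR_ne_zero (b - 1)
  have n3 := romanFactorialR_ne_zero (a - b - 1)
  field_simp
  ring
end

section
/- Telescoping sum within a region: let R ⊆ ℤ×ℤ be one of the six regions R1 = {(n,k) : n ≥ k ≥ 0}, R2 = {(n,k) : k ≥ 0 > n}, R3 = {(n,k) : 0 > n ≥ k}, R4 = {(n,k) : k > n ≥ 0}, R5 = {(n,k) : n ≥ 0 > k}, R6 = {(n,k) : 0 > k > n}. If r is a nonnegative integer and n, k are integers such that the four pairs (n,k), (n+r,k), (n,k+1), and (n+r+1,k+1) all lie in R, then ∑_{m=n}^{n+r} ⌊m choose k⌉ = ⌊n+r+1 choose k+1⌉ − ⌊n choose k+1⌉. -/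
lemma romanFactorial_ne_zero (n : ℤ) : romanFactorial n ≠ 0 := by
  unfold romanFactorial
  split
  · exact_mod_cast Nat.factorial_ne_zero _
  · apply div_ne_zero
    · exact zpow_ne_zero _ (by norm_num)
    · exact_mod_cast Nat.factorial_ne_zero _

lemma romanFactorial_succ (m : ℤ) (hm : m ≠ -1) :
    romanFactorial (m + 1) = (m + 1 : ℚ) * romanFactorial m := by
  rcases lt_trichotomy m (-1) with h | h | h
  · -- m ≤ -2
    have h1 : ¬ (0 ≤ m + 1) := by omega
    have h2 : ¬ (0 ≤ m) := by omega
    unfold romanFactorial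
    rw [if_neg h1, if_neg h2]
    have hfac : (-m - 1).toNat = (-(m+1) - 1).toNat + 1 := by omega
    have hpow : (-1 : ℚ) ^ (m + 1 + 1) = (-1) * (-1 : ℚ) ^ (m + 1) := by
      rw [zpow_add₀ (by norm_num : (-1:ℚ) ≠ 0) (m+1) 1]; ring
    rw [hfac, hpow, Nat.factorial_succ]
    have hne : ((-(m+1) - 1).toNat.factorial : ℚ) ≠ 0 := by
      exact_mod_cast Nat.factorial_ne_zero _
    have hz : (((-(m+1) - 1).toNat : ℤ) + 1) = -(m+1) := by omega
    have hcast : (((-(m+1) - 1).toNat : ℚ) + 1) = -((m:ℚ)+1) := by exact_mod_cast hz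
    rw [Nat.cast_mul, Nat.cast_add, Nat.cast_one, hcast]
    have hm1 : ((m:ℚ) + 1) ≠ 0 := by
      intro hc
      have : (m:ℚ) = -1 := by linarith
      exact hm (by exact_mod_cast this)
    rw [mul_div_assoc', div_eq_div_iff hne (mul_ne_zero (neg_ne_zero.mpr hm1) hne)]
    ring
  · exact absurd h hm
  · -- m ≥ 0
    have h2 : 0 ≤ m := by omega
    have h1 : 0 ≤ m + 1 := by omega
    unfold romanFactorial
    rw [if_pos h1, if_pos h2]
    have : (m + 1).toNat = m.toNat + 1 := by omega
    rw [this, Nat.factorial_succ]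
    push_cast
    have : ((m.toNat : ℚ)) = (m : ℚ) := by exact_mod_cast Int.toNat_of_nonneg h2
    rw [this]

lemma romanCoeff_pascal (n k : ℤ) (hn : n ≠ -1) (hk : k ≠ -1) (hnk : n ≠ k) :
    romanCoeff (n + 1) (k + 1) = romanCoeff n k + romanCoeff n (k + 1) := by
  have hA := romanFactorial_ne_zero n
  have hB := romanFactorial_ne_zero k
  have hC := romanFactorial_ne_zero (n - k - 1)
  have e1 : romanFactorial (n + 1) = (n + 1 : ℚ) * romanFactorial n :=
    romanFactorial_succ n hn
  have e2 : romanFactorial (k + 1) = (k + 1 : ℚ) * romanFactorial k :=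
    romanFactorial_succ k hk
  have e3 : romanFactorial (n - k) = (n - k : ℚ) * romanFactorial (n - k - 1) := by
    have := romanFactorial_succ (n - k - 1) (by omega)
    rw [show n - k - 1 + 1 = n - k by ring] at this
    rw [this]; push_cast; ring
  have hn1 : ((n:ℚ) + 1) ≠ 0 := by
    intro hc; exact hn (by exact_mod_cast (show (n:ℚ) = -1 by linarith))
  have hk1 : ((k:ℚ) + 1) ≠ 0 := by
    intro hc; exact hk (by exact_mod_cast (show (k:ℚ) = -1 by linarith))
  have hnk1 : ((n:ℚ) - k) ≠ 0 := by
    intro hc; exact hnk (by exact_mod_cast (show (n:ℚ) = k by linarith))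
  unfold romanCoeff
  rw [show n + 1 - (k + 1) = n - k by ring, show n - (k + 1) = n - k - 1 by ring,
    e1, e2, e3]
  field_simp
  ring

lemma region_convex (R : Set (ℤ × ℤ))
    (hR : R = {p : ℤ × ℤ | p.1 ≥ p.2 ∧ p.2 ≥ 0} ∨
          R = {p : ℤ × ℤ | p.2 ≥ 0 ∧ 0 > p.1} ∨
          R = {p : ℤ × ℤ | 0 > p.1 ∧ p.1 ≥ p.2} ∨
          R = {p : ℤ × ℤ | p.2 > p.1 ∧ p.1 ≥ 0} ∨
          R = {p : ℤ × ℤ | p.1 ≥ 0 ∧ 0 > p.2} ∨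
          R = {p : ℤ × ℤ | 0 > p.2 ∧ p.2 > p.1})
    (a b c k : ℤ) (ha : (a, k) ∈ R) (hb : (b, k) ∈ R) (h1 : a ≤ c) (h2 : c ≤ b) :
    (c, k) ∈ R := by
  rcases hR with rfl | rfl | rfl | rfl | rfl | rfl <;>
    simp only [Set.mem_setOf_eq] at * <;> omega

lemma region_pascal (R : Set (ℤ × ℤ))
    (hR : R = {p : ℤ × ℤ | p.1 ≥ p.2 ∧ p.2 ≥ 0} ∨
          R = {p : ℤ × ℤ | p.2 ≥ 0 ∧ 0 > p.1} ∨
          R = {p : ℤ × ℤ | 0 > p.1 ∧ p.1 ≥ p.2} ∨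
          R = {p : ℤ × ℤ | p.2 > p.1 ∧ p.1 ≥ 0} ∨
          R = {p : ℤ × ℤ | p.1 ≥ 0 ∧ 0 > p.2} ∨
          R = {p : ℤ × ℤ | 0 > p.2 ∧ p.2 > p.1})
    (m k : ℤ) (ha : (m, k) ∈ R) (hb : (m, k + 1) ∈ R) (hc : (m + 1, k + 1) ∈ R) :
    m ≠ -1 ∧ k ≠ -1 ∧ m ≠ k := by
  rcases hR with rfl | rfl | rfl | rfl | rfl | rfl <;>
    simp only [Set.mem_setOf_eq] at * <;> omega

lemma Icc_int_insert (a b : ℤ) (h : a ≤ b + 1) :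
    Finset.Icc a (b + 1) = insert (b + 1) (Finset.Icc a b) := by
  ext x
  simp only [Finset.mem_Icc, Finset.mem_insert]
  omega

/-- Telescoping sum within one of the six regions. -/
theorem romanCoeff_telescoping_sum (R : Set (ℤ × ℤ))
    (hR : R = {p : ℤ × ℤ | p.1 ≥ p.2 ∧ p.2 ≥ 0} ∨
          R = {p : ℤ × ℤ | p.2 ≥ 0 ∧ 0 > p.1} ∨
          R = {p : ℤ × ℤ | 0 > p.1 ∧ p.1 ≥ p.2} ∨
          R = {p : ℤ × ℤ | p.2 > p.1 ∧ p.1 ≥ 0} ∨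
          R = {p : ℤ × ℤ | p.1 ≥ 0 ∧ 0 > p.2} ∨
          R = {p : ℤ × ℤ | 0 > p.2 ∧ p.2 > p.1})
    (r : ℕ) (n k : ℤ)
    (h1 : (n, k) ∈ R) (h2 : (n + (r : ℤ), k) ∈ R)
    (h3 : (n, k + 1) ∈ R) (h4 : (n + (r : ℤ) + 1, k + 1) ∈ R) :
    ∑ m ∈ Finset.Icc n (n + (r : ℤ)), romanCoeff m k =
      romanCoeff (n + (r : ℤ) + 1) (k + 1) - romanCoeff n (k + 1) := by
  induction r with
  | zero =>
    simp only [Nat.cast_zero, add_zero] at *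
    rw [Finset.Icc_self, Finset.sum_singleton]
    obtain ⟨hn, hk, hnk⟩ := region_pascal R hR n k h1 h3 h4
    rw [romanCoeff_pascal n k hn hk hnk]
    ring
  | succ r ih =>
    have hc : ((r : ℤ) + 1) = ((r + 1 : ℕ) : ℤ) := by push_cast; ring
    have h2' : (n + (r : ℤ), k) ∈ R :=
      region_convex R hR n (n + ((r+1:ℕ) : ℤ)) (n + r) k h1 h2 (by omega)
        (by push_cast; omega)
    have h4' : (n + (r : ℤ) + 1, k + 1) ∈ R :=
      region_convex R hR n (n + ((r+1:ℕ) : ℤ) + 1) (n + r + 1) (k + 1) h3 h4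
        (by omega) (by push_cast; omega)
    have ih' := ih h2' h4'
    have hstep : (n + ((r+1:ℕ) : ℤ)) = (n + (r : ℤ)) + 1 := by push_cast; ring
    rw [hstep, Icc_int_insert n (n + (r:ℤ)) (by omega),
      Finset.sum_insert (by simp), ih']
    have hmem1 : (n + (r:ℤ) + 1, k) ∈ R := by rw [← hstep]; exact h2
    have hmem3 : (n + (r:ℤ) + 1 + 1, k + 1) ∈ R := by
      have : n + ((r+1:ℕ) : ℤ) + 1 = n + (r:ℤ) + 1 + 1 := by push_cast; ring
      rw [← this]; exact h4
    obtain ⟨hn, hk, hnk⟩ := region_pascal R hR (n + (r:ℤ) + 1) k hmem1 h4' hmem3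
    rw [romanCoeff_pascal (n + (r:ℤ) + 1) k hn hk hnk]
    ring
end

section
/- Reflection identity: for all integers n and k, ⌊n choose k⌉ = (-1)^(n+k+[n<0]+[k<0])·⌊-k-1 choose -n-1⌉, where [P] denotes 1 if the condition P holds and 0 otherwise (Iverson bracket). -/
lemma romanFactorial_mul_romanFactorial_neg_sub_one (n : ℤ) :
    romanFactorial n * romanFactorial (-n - 1) = (-1 : ℚ) ^ (n + if n < 0 then 1 else 0) := by
  unfold romanFactorial
  rcases le_or_gt 0 n with hn | hn
  · have hfac : (n.toNat.factorial : ℚ) ≠ 0 := by exact_mod_cast Nat.factorial_ne_zero _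
    rw [if_pos hn, if_neg (by omega), if_neg hn.not_gt, show -(-n - 1) - 1 = n by ring,
      show -n - 1 + 1 = -n by ring, add_zero, zpow_neg, ← inv_zpow, inv_neg_one]
    field_simp
  · have hfac : ((-n - 1).toNat.factorial : ℚ) ≠ 0 := by exact_mod_cast Nat.factorial_ne_zero _
    rw [if_neg hn.not_ge, if_pos (by omega), if_pos hn]
    field_simp

lemma romanCoeff_neg_sub_one_neg_sub_one (n k : ℤ) :
    romanCoeff (-k - 1) (-n - 1) =
      (-1 : ℚ) ^ (n + (if n < 0 then 1 else 0) + (k + if k < 0 then 1 else 0)) * romanCoeff n k := by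
  have hn := romanFactorial_mul_romanFactorial_neg_sub_one n
  have hk := romanFactorial_mul_romanFactorial_neg_sub_one k
  have hk0 := romanFactorial_ne_zero k
  have hnk0 := romanFactorial_ne_zero (n - k)
  have hn0' := romanFactorial_ne_zero (-n - 1)
  have hsign_sq : (romanFactorial n * romanFactorial (-n - 1)) ^ 2 = 1 := by
    rw [hn, sq, ← mul_zpow]
    norm_num
  unfold romanCoeff
  rw [show -k - 1 - (-n - 1) = n - k by ring, zpow_add₀ (by norm_num), ← hn, ← hk]
  field_simp
  linear_combination (-romanFactorial (-k - 1)) * hsign_sq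

/-- Reflection identity:
`⌊n choose k⌉ = (-1)^(n+k+[n<0]+[k<0]) ⌊-k-1 choose -n-1⌉`. -/
theorem romanCoeff_reflection (n k : ℤ) :
    romanCoeff n k =
      (-1 : ℚ) ^ (n + k + (if n < 0 then 1 else 0) + (if k < 0 then 1 else 0)) *
        romanCoeff (-k - 1) (-n - 1) := by
  rw [romanCoeff_neg_sub_one_neg_sub_one, ← mul_assoc, ← zpow_add₀ (by norm_num)]
  have hsign_even : Even (n + k + (if n < 0 then 1 else 0) + (if k < 0 then 1 else 0) +
      (n + (if n < 0 then 1 else 0) + (k + if k < 0 then 1 else 0))) :=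
    ⟨n + k + (if n < 0 then 1 else 0) + (if k < 0 then 1 else 0), by ring⟩
  rw [hsign_even.neg_one_zpow, one_mul]
end

section
/- Knuth coefficients and the six regions: let ε be a nonzero real number and n, k integers. If (n,k) lies in region 1, 2, or 3, i.e. (n ≥ k ≥ 0) or (k ≥ 0 > n) or (0 > n ≥ k), then the Knuth coefficient equals the Roman coefficient: ⌈n choose k⌉_ε = ⌊n choose k⌉. Otherwise, i.e. if (k > n ≥ 0) or (n ≥ 0 > k) or (0 > k > n), then ⌈n choose k⌉_ε = ε·⌊n choose k⌉. -/
/-- Knuth factorial of an integer, with parameter `ε`. -/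
noncomputable def knuthFactorial (ε : ℝ) (n : ℤ) : ℝ :=
  if 0 ≤ n then (n.toNat.factorial : ℝ)
  else (-1 : ℝ) ^ (n + 1) / (ε * ((-n - 1).toNat.factorial : ℝ))

/-- Knuth coefficient of two integers, with parameter `ε`. -/
noncomputable def knuthCoeff (ε : ℝ) (n k : ℤ) : ℝ :=
  knuthFactorial ε n / (knuthFactorial ε k * knuthFactorial ε (n - k))


lemma knuth_eq (ε : ℝ) (n : ℤ) :
    knuthFactorial ε n = (romanFactorial n : ℝ) * (if 0 ≤ n then 1 else ε⁻¹) := by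
  unfold knuthFactorial romanFactorial
  split_ifs with h
  · push_cast; ring
  · push_cast; ring

lemma knuthCoeff_eq (ε : ℝ) (n k : ℤ) :
    knuthCoeff ε n k = (romanCoeff n k : ℝ) *
      ((if 0 ≤ n then 1 else ε⁻¹) /
        ((if 0 ≤ k then 1 else ε⁻¹) * (if 0 ≤ n - k then 1 else ε⁻¹))) := by
  unfold knuthCoeff romanCoeff
  rw [knuth_eq, knuth_eq, knuth_eq]
  push_cast
  ring

/-- Knuth coefficients and the six regions: in regions 1, 2 and 3 the Knuth
coefficient equals the Roman coefficient, and in regions 4, 5 and 6 it equals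
`ε` times the Roman coefficient. -/
theorem knuthCoeff_six_regions (ε : ℝ) (hε : ε ≠ 0) (n k : ℤ) :
    (((n ≥ k ∧ k ≥ 0) ∨ (k ≥ 0 ∧ 0 > n) ∨ (0 > n ∧ n ≥ k)) →
      knuthCoeff ε n k = (romanCoeff n k : ℝ)) ∧
    (((k > n ∧ n ≥ 0) ∨ (n ≥ 0 ∧ 0 > k) ∨ (0 > k ∧ k > n)) →
      knuthCoeff ε n k = ε * (romanCoeff n k : ℝ)) := by
  constructor
  · rintro (⟨h1, h2⟩ | ⟨h1, h2⟩ | ⟨h1, h2⟩) <;> rw [knuthCoeff_eq] <;>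
      [ (rw [if_pos (h2.trans h1), if_pos h2, if_pos (by omega)]);
        (rw [if_neg (by omega), if_pos h1, if_neg (by omega)]);
        (rw [if_neg (by omega), if_neg (by omega), if_pos (by omega)]) ] <;>
      field_simp
  · rintro (⟨h1, h2⟩ | ⟨h1, h2⟩ | ⟨h1, h2⟩) <;> rw [knuthCoeff_eq] <;>
      [ (rw [if_pos h2, if_pos (by omega), if_neg (by omega)]);
        (rw [if_pos h1, if_neg (by omega), if_pos (by omega)]);
        (rw [if_neg (by omega), if_neg (by omega), if_neg (by omega)]) ] <;>
      field_simp <;> ring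
end
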